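/- Let V, Y be real Hilbert spaces, ι : V → Y a bounded linear map, and a : V × V → ℝ a symmetric bounded coercive bilinear form (|a(v,w)| ≤ a_max‖v‖_V‖w‖_V and a(v,v) ≥ a_min‖v‖_V² with 0 < a_min ≤ a_max). Let V_f ⊆ V be a closed subspace satisfying ‖ι v‖_Y ≤ C_P H ‖v‖_V for all v ∈ V_f, for some constants C_P, H > 0, and let V_H := {w ∈ V : a(w,v) = 0 for all v ∈ V_f} be its a-orthogonal complement. Let ρ ∈ Y, let z ∈ V satisfy a(z,v) = ⟪ρ, ιv⟫_Y for all v ∈ V, and let z_H ∈ V_H satisfy a(z_H, w) = ⟪ρ, ιw⟫_Y for all w ∈ V_H. Then ‖z − z_H‖_V ≤ (a_max/a_min)^{1/2} (C_P H / a_min) ‖ρ‖_Y. -/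

import Mathlib

/-!
Galerkin orthogonality makes the error `e = z - z_H` `a`-orthogonal to `V_H`. Lax–Milgram on
`V_f` splits `V = V_f ⊕ V_H`, and by symmetry of `a` the `V_H`-component `h` of `e` satisfies
`a(h, h) = a(e, h) - a(h, e - h) = 0 - 0`, so `e ∈ V_f`. Then `a(z_H, e) = 0`, and coercivity
with the Poincaré inequality gives `a_min ‖e‖² ≤ a(e, e) = ⟪ρ, ι e⟫ ≤ C_P H ‖ρ‖ ‖e‖`.
-/

open scoped RealInnerProductSpace

theorem IsCoercive.exists_forall_eq {K : Type*} [NormedAddCommGroup K]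
    [InnerProductSpace ℝ K] [CompleteSpace K] {B : K →L[ℝ] K →L[ℝ] ℝ} (hB : IsCoercive B)
    (ℓ : K →L[ℝ] ℝ) :
    ∃ f, ∀ v, B f v = ℓ v := by
  refine ⟨hB.continuousLinearEquivOfBilin.symm ((InnerProductSpace.toDual ℝ K).symm ℓ),
    fun v => ?_⟩
  rw [← hB.continuousLinearEquivOfBilin_apply, ContinuousLinearEquiv.apply_symm_apply,
    InnerProductSpace.toDual_symm_apply]

section

variable {V : Type*} [NormedAddCommGroup V] [InnerProductSpace ℝ V]
  {a : V →ₗ[ℝ] V →ₗ[ℝ] ℝ} {C c : ℝ}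

theorem LinearMap.exists_mem_forall_sub_eq_zero (K : Submodule ℝ V) [CompleteSpace K]
    (hbound : ∀ v w, |a v w| ≤ C * ‖v‖ * ‖w‖) (hc : 0 < c)
    (hcoer : ∀ v ∈ K, c * ‖v‖ ^ 2 ≤ a v v) (x : V) :
    ∃ f ∈ K, ∀ v ∈ K, a (x - f) v = 0 := by
  let B : K →L[ℝ] K →L[ℝ] ℝ :=
    (a.compl₁₂ K.subtype K.subtype).mkContinuous₂ C fun u v => by simpa using hbound u v
  have hB : IsCoercive B := ⟨c, hc, fun u => by
    rw [mul_assoc, ← sq]; exact hcoer u u.2⟩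
  let ℓ : K →L[ℝ] ℝ :=
    ((a x).comp K.subtype).mkContinuous (C * ‖x‖) fun v => by
      simpa [mul_assoc] using hbound x v
  obtain ⟨f, hf⟩ := hB.exists_forall_eq ℓ
  refine ⟨f, f.2, fun v hv => ?_⟩
  have : a f v = a x v := hf ⟨v, hv⟩
  rw [LinearMap.map_sub₂, this, sub_self]

theorem LinearMap.mem_of_apply_orthogonal_eq_zero (K : Submodule ℝ V) [CompleteSpace K]
    (hsym : ∀ v w, a v w = a w v) (hbound : ∀ v w, |a v w| ≤ C * ‖v‖ * ‖w‖) (hc : 0 < c)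
    (hcoer : ∀ v, c * ‖v‖ ^ 2 ≤ a v v) {e : V}
    (he : ∀ w ∈ {w : V | ∀ v ∈ K, a w v = 0}, a e w = 0) : e ∈ K := by
  obtain ⟨f, hfK, hf⟩ := a.exists_mem_forall_sub_eq_zero K hbound hc (fun v _ => hcoer v) e
  have hzero : a (e - f) (e - f) = 0 := by
    rw [LinearMap.map_sub₂, he _ hf, hsym, hf f hfK, sub_self]
  have : ‖e - f‖ ^ 2 = 0 := by
    nlinarith [hcoer (e - f), sq_nonneg ‖e - f‖]
  simpa [sub_eq_zero.mp (by simpa using this)] using hfK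

end

theorem le_div_of_mul_sq_le_mul {x c M : ℝ} (hx : 0 ≤ x) (hc : 0 < c) (hM : 0 ≤ M)
    (h : c * x ^ 2 ≤ M * x) : x ≤ M / c := by
  rw [le_div_iff₀ hc]
  rcases hx.eq_or_lt with rfl | hx
  · simpa using hM
  · nlinarith

theorem stmt13_general
    {V Y : Type*}
    [NormedAddCommGroup V] [InnerProductSpace ℝ V] [CompleteSpace V]
    [NormedAddCommGroup Y] [InnerProductSpace ℝ Y]
    (ι : V →L[ℝ] Y)
    (a : V →ₗ[ℝ] V →ₗ[ℝ] ℝ)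
    (a_min a_max : ℝ)
    (ha_min : 0 < a_min) (hminmax : a_min ≤ a_max)
    (hsym : ∀ v w : V, a v w = a w v)
    (hbound : ∀ v w : V, |a v w| ≤ a_max * ‖v‖ * ‖w‖)
    (hcoer : ∀ v : V, a_min * ‖v‖ ^ 2 ≤ a v v)
    (V_f : Submodule ℝ V) (hVf : IsClosed (V_f : Set V))
    (C_P H : ℝ) (hCP : 0 < C_P) (hH : 0 < H)
    (hPoincare : ∀ v ∈ V_f, ‖ι v‖ ≤ C_P * H * ‖v‖)
    (ρ : Y) (z z_H : V)
    (hz : ∀ v : V, a z v = ⟪ρ, ι v⟫)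
    (hzH_mem : z_H ∈ {w : V | ∀ v ∈ V_f, a w v = 0})
    (hzH_eq : ∀ w ∈ {w : V | ∀ v ∈ V_f, a w v = 0}, a z_H w = ⟪ρ, ι w⟫) :
    ‖z - z_H‖ ≤ Real.sqrt (a_max / a_min) * (C_P * H / a_min) * ‖ρ‖ := by
  have : CompleteSpace V_f := hVf.completeSpace_coe
  have hgalerkin : ∀ w ∈ {w : V | ∀ v ∈ V_f, a w v = 0}, a (z - z_H) w = 0 := fun w hw => by
    rw [LinearMap.map_sub₂, hz, hzH_eq w hw, sub_self]
  have hmem : z - z_H ∈ V_f :=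
    a.mem_of_apply_orthogonal_eq_zero V_f hsym hbound ha_min hcoer hgalerkin
  have henergy : a_min * ‖z - z_H‖ ^ 2 ≤ C_P * H * ‖ρ‖ * ‖z - z_H‖ :=
    calc a_min * ‖z - z_H‖ ^ 2 ≤ a (z - z_H) (z - z_H) := hcoer _
      _ = ⟪ρ, ι (z - z_H)⟫ := by rw [LinearMap.map_sub₂, hz, hzH_mem _ hmem, sub_zero]
      _ ≤ ‖ρ‖ * ‖ι (z - z_H)‖ := real_inner_le_norm _ _
      _ ≤ ‖ρ‖ * (C_P * H * ‖z - z_H‖) := by gcongr; exact hPoincare _ hmem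
      _ = C_P * H * ‖ρ‖ * ‖z - z_H‖ := by ring
  have hsqrt : 1 ≤ Real.sqrt (a_max / a_min) :=
    Real.one_le_sqrt.mpr ((one_le_div ha_min).mpr hminmax)
  calc ‖z - z_H‖ ≤ C_P * H * ‖ρ‖ / a_min :=
        le_div_of_mul_sq_le_mul (norm_nonneg _) ha_min (by positivity) henergy
    _ = 1 * (C_P * H / a_min) * ‖ρ‖ := by ring
    _ ≤ Real.sqrt (a_max / a_min) * (C_P * H / a_min) * ‖ρ‖ := by gcongr

/-- Accuracy of the Galerkin solution in the global GRPS space (Theorem 3.3,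
abstract form): `V_H` is the `a`-orthogonal complement of the fine space `V_f`,
which satisfies a Poincaré-type inequality with constant `C_P H`. -/
theorem stmt13
    {V Y : Type*}
    [NormedAddCommGroup V] [InnerProductSpace ℝ V] [CompleteSpace V]
    [NormedAddCommGroup Y] [InnerProductSpace ℝ Y] [CompleteSpace Y]
    (ι : V →L[ℝ] Y)
    (a : V →ₗ[ℝ] V →ₗ[ℝ] ℝ)
    (a_min a_max : ℝ)
    (ha_min : 0 < a_min) (hminmax : a_min ≤ a_max)
    (hsym : ∀ v w : V, a v w = a w v)
    (hbound : ∀ v w : V, |a v w| ≤ a_max * ‖v‖ * ‖w‖)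
    (hcoer : ∀ v : V, a_min * ‖v‖ ^ 2 ≤ a v v)
    (V_f : Submodule ℝ V) (hVf : IsClosed (V_f : Set V))
    (C_P H : ℝ) (hCP : 0 < C_P) (hH : 0 < H)
    (hPoincare : ∀ v ∈ V_f, ‖ι v‖ ≤ C_P * H * ‖v‖)
    (ρ : Y) (z z_H : V)
    (hz : ∀ v : V, a z v = ⟪ρ, ι v⟫)
    (hzH_mem : z_H ∈ {w : V | ∀ v ∈ V_f, a w v = 0})
    (hzH_eq : ∀ w ∈ {w : V | ∀ v ∈ V_f, a w v = 0}, a z_H w = ⟪ρ, ι w⟫) :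
    ‖z - z_H‖ ≤ Real.sqrt (a_max / a_min) * (C_P * H / a_min) * ‖ρ‖ :=
  stmt13_general ι a a_min a_max ha_min hminmax hsym hbound hcoer V_f hVf C_P H hCP hH hPoincare ρ z
    z_H hz hzH_mem hzH_eq
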